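/- Let G be a finite group and ρ a linear representation of G on a finite-dimensional real normed vector space X. Let T be a positive integer and 0 < δ ≤ 1/|G|. Let s(t), t = 0,1,2,..., be vectors of convex weights on G such that for every t the composite convex weight vector q(t,T) = s(t+T−1) ∗ ⋯ ∗ s(t) satisfies q(t,T)(g) > δ for all g ∈ G. Define x(t+1) = ∑_{g∈G} s_g(t)·ρ(g)(x(t)) from any initial x(0) ∈ X, and let F̄ = (1/|G|) ∑_{g∈G} ρ(g). Then lim_{t→∞} x(t) = F̄(x(0)), and there exists a constant C ≥ 0 (depending on x(0) and ρ) such that ‖x(t) − F̄(x(0))‖ ≤ C·(1 − |G|δ)^{⌊t/T⌋} for all t. -/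

import Mathlib

/-- A vector of convex weights on a finite type: nonnegative entries summing to 1. -/
def IsConvexWeights {G : Type*} [Fintype G] (s : G → ℝ) : Prop :=
  (∀ g, 0 ≤ s g) ∧ ∑ g, s g = 1

/-- Group convolution of weight vectors: `(s ∗ p)(g) = ∑ h, s(h) p(h⁻¹ g)`. -/
def groupConv {G : Type*} [Group G] [Fintype G] (s p : G → ℝ) : G → ℝ :=
  fun g => ∑ h : G, s h * p (h⁻¹ * g)

/-- The composite weights describing the evolution from time `t` to `t + T`:
`compWeights s t T = s(t+T−1) ∗ ⋯ ∗ s(t+1) ∗ s(t)` (the empty composite, `T = 0`,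
is the delta distribution at the identity). -/
def compWeights {G : Type*} [Group G] [Fintype G] [DecidableEq G]
    (s : ℕ → G → ℝ) (t : ℕ) : ℕ → G → ℝ
  | 0 => fun g => if g = 1 then 1 else 0
  | T + 1 => groupConv (s (t + T)) (compWeights s t T)

/-!
Work with the deviation `e t = x t - F̄ (x 0)`, where `F̄ = ρ.symmetrize`: since `F̄ (x 0)` is
`ρ`-invariant and convex averages commute with `F̄`, the deviation obeys the same recursion and
`∑ g, ρ g (e t) = 0`. Measure it by the `ρ`-invariant norm `ν = ρ.orbitNorm`,
`ν v = ∑ g, ‖ρ g v‖ ≥ ‖v‖`. Convex averages do not increase `ν`, and over a window of length `T`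
the composite weights `q` exceed `δ`; because `∑ g, ρ g e = 0`, subtracting `δ` from every weight
leaves the average unchanged, so `ν` contracts by `∑ g, (q g - δ) = 1 - |G| δ`.
Hence `‖e t‖ ≤ ν (e 0) (1 - |G| δ) ^ ⌊t / T⌋`.
-/
open Filter Topology

section Weights

variable {G : Type*} [Group G] [Fintype G]

theorem IsConvexWeights.groupConv {p q : G → ℝ} (hp : IsConvexWeights p)
    (hq : IsConvexWeights q) : IsConvexWeights (groupConv p q) := by
  refine ⟨fun g => Finset.sum_nonneg fun h _ => mul_nonneg (hp.1 h) (hq.1 _), ?_⟩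
  have hshift (h : G) : ∑ g, q (h⁻¹ * g) = 1 :=
    (Equiv.sum_comp (Equiv.mulLeft h⁻¹) q).trans hq.2
  simp only [_root_.groupConv]
  rw [Finset.sum_comm]
  simp only [← Finset.mul_sum, hshift, mul_one, hp.2]

theorem isConvexWeights_compWeights [DecidableEq G] {s : ℕ → G → ℝ}
    (hs : ∀ t, IsConvexWeights (s t)) (t : ℕ) : ∀ k, IsConvexWeights (compWeights s t k)
  | 0 => ⟨fun g => by unfold compWeights; split_ifs <;> norm_num, by simp [compWeights]⟩
  | k + 1 => (hs (t + k)).groupConv (isConvexWeights_compWeights hs t k)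

end Weights

theorem le_pow_div_mul_of_antitone {a : ℕ → ℝ} {r : ℝ} {T : ℕ} (ha : Antitone a)
    (hr : 0 ≤ r) (hT : ∀ t, a (t + T) ≤ r * a t) (t : ℕ) : a t ≤ a 0 * r ^ (t / T) := by
  have hblock (n : ℕ) : a (n * T) ≤ a 0 * r ^ n := by
    induction n with
    | zero => simp
    | succ n ih =>
      calc a ((n + 1) * T) = a (n * T + T) := by rw [Nat.succ_mul]
        _ ≤ r * a (n * T) := hT _
        _ ≤ r * (a 0 * r ^ n) := mul_le_mul_of_nonneg_left ih hr
        _ = a 0 * r ^ (n + 1) := by ring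
  exact (ha (Nat.div_mul_le_self t T)).trans (hblock _)

theorem tendsto_pow_div_atTop_nhds_zero {r : ℝ} (hr₀ : 0 ≤ r) (hr₁ : r < 1) {T : ℕ}
    (hT : T ≠ 0) : Tendsto (fun t : ℕ => r ^ (t / T)) atTop (𝓝 0) :=
  (tendsto_pow_atTop_nhds_zero_of_lt_one hr₀ hr₁).comp (Nat.tendsto_div_const_atTop hT)

namespace Representation

variable {G : Type*} [Group G] [Fintype G]

section Algebraic

variable {V : Type*} [AddCommGroup V] [Module ℝ V] (ρ : Representation ℝ G V)

def weightedAvg (q : G → ℝ) : V →ₗ[ℝ] V := ∑ g, q g • ρ g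

theorem weightedAvg_apply (q : G → ℝ) (v : V) : ρ.weightedAvg q v = ∑ g, q g • ρ g v := by
  simp [weightedAvg]

theorem weightedAvg_groupConv (p q : G → ℝ) (v : V) :
    ρ.weightedAvg (groupConv p q) v = ρ.weightedAvg p (ρ.weightedAvg q v) := by
  have hshift (h : G) : ∑ g, q (h⁻¹ * g) • ρ g v = ∑ g, q g • ρ h (ρ g v) :=
    Fintype.sum_equiv (Equiv.mulLeft h⁻¹) _ _ fun g => by simp [map_mul]
  calc ρ.weightedAvg (groupConv p q) v = ∑ h, p h • ∑ g, q (h⁻¹ * g) • ρ g v := by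
        simp only [weightedAvg_apply, groupConv, Finset.sum_smul, mul_smul, Finset.smul_sum]
        exact Finset.sum_comm
    _ = ρ.weightedAvg p (ρ.weightedAvg q v) := by
        rw [weightedAvg_apply ρ p, weightedAvg_apply ρ q]
        simp only [hshift, map_sum, map_smul]

theorem weightedAvg_compWeights [DecidableEq G] {s : ℕ → G → ℝ} {x : ℕ → V}
    (hx : ∀ t, x (t + 1) = ρ.weightedAvg (s t) (x t)) (t : ℕ) :
    ∀ k, x (t + k) = ρ.weightedAvg (compWeights s t k) (x t)
  | 0 => by simp [weightedAvg_apply, compWeights, ite_smul]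
  | k + 1 => by
    rw [← add_assoc, hx, weightedAvg_compWeights hx t k, compWeights, weightedAvg_groupConv]

theorem weightedAvg_of_forall_apply_eq {q : G → ℝ} (hq : ∑ g, q g = 1) {w : V}
    (hw : ∀ g, ρ g w = w) : ρ.weightedAvg q w = w := by
  simp [weightedAvg_apply, hw, ← Finset.sum_smul, hq]

noncomputable def symmetrize : V →ₗ[ℝ] V := (Fintype.card G : ℝ)⁻¹ • ∑ g, ρ g

theorem symmetrize_apply (v : V) :
    ρ.symmetrize v = (Fintype.card G : ℝ)⁻¹ • ∑ g, ρ g v := by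
  simp [symmetrize]

theorem apply_symmetrize (h : G) (v : V) : ρ h (ρ.symmetrize v) = ρ.symmetrize v := by
  simp only [symmetrize_apply, map_smul, map_sum, ← Module.End.mul_apply, ← map_mul]
  congr 1
  exact Equiv.sum_comp (Equiv.mulLeft h) (fun g => ρ g v)

theorem symmetrize_apply_apply (h : G) (v : V) : ρ.symmetrize (ρ h v) = ρ.symmetrize v := by
  rw [symmetrize_apply, symmetrize_apply]
  simp only [← Module.End.mul_apply, ← map_mul]
  congr 1
  exact Equiv.sum_comp (Equiv.mulRight h) (fun g => ρ g v)

theorem symmetrize_symmetrize (v : V) : ρ.symmetrize (ρ.symmetrize v) = ρ.symmetrize v := by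
  have hG : (Fintype.card G : ℝ) ≠ 0 := Nat.cast_ne_zero.2 Fintype.card_ne_zero
  rw [symmetrize_apply ρ (ρ.symmetrize v)]
  simp only [apply_symmetrize, Finset.sum_const, Finset.card_univ, ← Nat.cast_smul_eq_nsmul ℝ,
    smul_smul, inv_mul_cancel₀ hG, one_smul]

theorem symmetrize_weightedAvg {q : G → ℝ} (hq : ∑ g, q g = 1) (v : V) :
    ρ.symmetrize (ρ.weightedAvg q v) = ρ.symmetrize v := by
  simp [weightedAvg_apply, symmetrize_apply_apply, ← Finset.sum_smul, hq]

theorem sum_apply_eq_zero_of_symmetrize_eq_zero {v : V} (hv : ρ.symmetrize v = 0) :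
    ∑ g, ρ g v = 0 := by
  rw [symmetrize_apply, smul_eq_zero] at hv
  exact hv.resolve_left (inv_ne_zero (Nat.cast_ne_zero.2 Fintype.card_ne_zero))

variable {s : ℕ → G → ℝ} {x : ℕ → V}

theorem symmetrize_eq_of_recursion (hs : ∀ t, IsConvexWeights (s t))
    (hx : ∀ t, x (t + 1) = ρ.weightedAvg (s t) (x t)) (t : ℕ) :
    ρ.symmetrize (x t) = ρ.symmetrize (x 0) := by
  induction t with
  | zero => rfl
  | succ t ih => rw [hx, symmetrize_weightedAvg ρ (hs t).2, ih]

theorem symmetrize_sub_symmetrize_eq_zero_of_recursion (hs : ∀ t, IsConvexWeights (s t))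
    (hx : ∀ t, x (t + 1) = ρ.weightedAvg (s t) (x t)) (t : ℕ) :
    ρ.symmetrize (x t - ρ.symmetrize (x 0)) = 0 := by
  rw [map_sub, symmetrize_symmetrize, ρ.symmetrize_eq_of_recursion hs hx, sub_self]

theorem sub_symmetrize_eq_weightedAvg_compWeights [DecidableEq G]
    (hs : ∀ t, IsConvexWeights (s t)) (hx : ∀ t, x (t + 1) = ρ.weightedAvg (s t) (x t))
    (t k : ℕ) :
    x (t + k) - ρ.symmetrize (x 0) =
      ρ.weightedAvg (compWeights s t k) (x t - ρ.symmetrize (x 0)) := by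
  rw [map_sub, ← ρ.weightedAvg_compWeights hx, ρ.weightedAvg_of_forall_apply_eq
    (isConvexWeights_compWeights hs t k).2 (ρ.apply_symmetrize · _)]

end Algebraic

section Normed

variable {X : Type*} [NormedAddCommGroup X] [NormedSpace ℝ X] (ρ : Representation ℝ G X)

def orbitNorm (v : X) : ℝ := ∑ g, ‖ρ g v‖

theorem orbitNorm_nonneg (v : X) : 0 ≤ ρ.orbitNorm v :=
  Finset.sum_nonneg fun _ _ => norm_nonneg _

theorem norm_le_orbitNorm (v : X) : ‖v‖ ≤ ρ.orbitNorm v := by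
  simpa [orbitNorm] using Finset.single_le_sum (f := fun g => ‖ρ g v‖) (fun _ _ => norm_nonneg _)
    (Finset.mem_univ 1)

theorem orbitNorm_apply (h : G) (v : X) : ρ.orbitNorm (ρ h v) = ρ.orbitNorm v :=
  Fintype.sum_equiv (Equiv.mulRight h) _ _ fun g => by simp [map_mul]

theorem orbitNorm_weightedAvg_le {q : G → ℝ} (hq : ∀ g, 0 ≤ q g) (v : X) :
    ρ.orbitNorm (ρ.weightedAvg q v) ≤ (∑ g, q g) * ρ.orbitNorm v :=
  calc ρ.orbitNorm (ρ.weightedAvg q v) = ∑ h, ‖∑ g, q g • ρ h (ρ g v)‖ := by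
        simp [orbitNorm, weightedAvg_apply]
    _ ≤ ∑ h, ∑ g, q g * ‖ρ h (ρ g v)‖ := by
        refine Finset.sum_le_sum fun h _ => (norm_sum_le _ _).trans_eq ?_
        simp [norm_smul, abs_of_nonneg (hq _)]
    _ = ∑ g, q g * ρ.orbitNorm (ρ g v) := by
        rw [Finset.sum_comm]; simp [orbitNorm, Finset.mul_sum]
    _ = (∑ g, q g) * ρ.orbitNorm v := by simp [orbitNorm_apply, Finset.sum_mul]

theorem orbitNorm_weightedAvg_le_of_isConvexWeights {q : G → ℝ} (hq : IsConvexWeights q)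
    (v : X) : ρ.orbitNorm (ρ.weightedAvg q v) ≤ ρ.orbitNorm v := by
  simpa [hq.2] using ρ.orbitNorm_weightedAvg_le hq.1 v

theorem orbitNorm_weightedAvg_le_of_symmetrize_eq_zero {q : G → ℝ} (hq : ∑ g, q g = 1)
    {δ : ℝ} (hδ : ∀ g, δ ≤ q g) {v : X} (hv : ρ.symmetrize v = 0) :
    ρ.orbitNorm (ρ.weightedAvg q v) ≤ (1 - Fintype.card G * δ) * ρ.orbitNorm v := by
  have hshift : ρ.weightedAvg q v = ρ.weightedAvg (fun g => q g - δ) v := by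
    simp [weightedAvg_apply, sub_smul, ← Finset.smul_sum,
      ρ.sum_apply_eq_zero_of_symmetrize_eq_zero hv]
  rw [hshift]
  convert ρ.orbitNorm_weightedAvg_le (fun g => sub_nonneg.2 (hδ g)) v using 2
  simp [Finset.sum_sub_distrib, hq]

theorem orbitNorm_sub_symmetrize_le [DecidableEq G] {s : ℕ → G → ℝ} {x : ℕ → X}
    (hs : ∀ t, IsConvexWeights (s t)) (hx : ∀ t, x (t + 1) = ρ.weightedAvg (s t) (x t))
    {T : ℕ} {δ : ℝ} (hδ : Fintype.card G * δ ≤ 1) (hq : ∀ t g, δ ≤ compWeights s t T g)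
    (t : ℕ) :
    ρ.orbitNorm (x t - ρ.symmetrize (x 0)) ≤
      ρ.orbitNorm (x 0 - ρ.symmetrize (x 0)) * (1 - Fintype.card G * δ) ^ (t / T) := by
  have hdev := ρ.sub_symmetrize_eq_weightedAvg_compWeights hs hx
  refine le_pow_div_mul_of_antitone (a := fun t => ρ.orbitNorm (x t - ρ.symmetrize (x 0)))
    (antitone_nat_of_succ_le fun t => ?_) (sub_nonneg.2 hδ) (fun t => ?_) t
  · rw [hdev t 1]
    exact ρ.orbitNorm_weightedAvg_le_of_isConvexWeights (isConvexWeights_compWeights hs t 1) _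
  · rw [hdev t T]
    exact ρ.orbitNorm_weightedAvg_le_of_symmetrize_eq_zero
      (isConvexWeights_compWeights hs t T).2 (hq t)
      (ρ.symmetrize_sub_symmetrize_eq_zero_of_recursion hs hx t)

end Normed

end Representation

theorem exponential_convergence_to_symmetrization_general
    {G : Type*} [Group G] [Fintype G] [DecidableEq G]
    {X : Type*} [NormedAddCommGroup X] [NormedSpace ℝ X]
    (ρ : Representation ℝ G X)
    (T : ℕ) (hT : 0 < T)
    (δ : ℝ) (hδ0 : 0 < δ) (hδ1 : δ ≤ 1 / (Fintype.card G : ℝ))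
    (s : ℕ → G → ℝ) (hs : ∀ t, IsConvexWeights (s t))
    (hq : ∀ (t : ℕ) (g : G), δ < compWeights s t T g)
    (x : ℕ → X)
    (hx : ∀ t, x (t + 1) = ∑ g : G, s t g • ρ g (x t)) :
    Filter.Tendsto x Filter.atTop
        (nhds ((Fintype.card G : ℝ)⁻¹ • ∑ g : G, ρ g (x 0)))
    ∧ ∃ C : ℝ, 0 ≤ C ∧ ∀ t : ℕ,
        ‖x t - (Fintype.card G : ℝ)⁻¹ • ∑ g : G, ρ g (x 0)‖
          ≤ C * (1 - (Fintype.card G : ℝ) * δ) ^ (t / T) := by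
  simp only [← ρ.weightedAvg_apply, ← ρ.symmetrize_apply] at hx ⊢
  have hG : (0 : ℝ) < Fintype.card G := Nat.cast_pos.2 Fintype.card_pos
  have hGδ : Fintype.card G * δ ≤ 1 := (le_div_iff₀' hG).1 hδ1
  have hr₁ : 1 - Fintype.card G * δ < 1 := sub_lt_self 1 (mul_pos hG hδ0)
  set C := ρ.orbitNorm (x 0 - ρ.symmetrize (x 0))
  have hbound (t : ℕ) : ‖x t - ρ.symmetrize (x 0)‖ ≤ C * (1 - Fintype.card G * δ) ^ (t / T) :=
    (ρ.norm_le_orbitNorm _).trans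
      (ρ.orbitNorm_sub_symmetrize_le hs hx hGδ (fun t g => (hq t g).le) t)
  refine ⟨?_, C, ρ.orbitNorm_nonneg _, hbound⟩
  rw [tendsto_iff_norm_sub_tendsto_zero]
  refine squeeze_zero (fun t => norm_nonneg _) hbound ?_
  simpa using (tendsto_pow_div_atTop_nhds_zero (sub_nonneg.2 hGδ) hr₁ hT.ne').const_mul C

theorem exponential_convergence_to_symmetrization
    {G : Type*} [Group G] [Fintype G] [DecidableEq G]
    {X : Type*} [NormedAddCommGroup X] [NormedSpace ℝ X] [FiniteDimensional ℝ X]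
    (ρ : Representation ℝ G X)
    (T : ℕ) (hT : 0 < T)
    (δ : ℝ) (hδ0 : 0 < δ) (hδ1 : δ ≤ 1 / (Fintype.card G : ℝ))
    (s : ℕ → G → ℝ) (hs : ∀ t, IsConvexWeights (s t))
    (hq : ∀ (t : ℕ) (g : G), δ < compWeights s t T g)
    (x : ℕ → X)
    (hx : ∀ t, x (t + 1) = ∑ g : G, s t g • ρ g (x t)) :
    Filter.Tendsto x Filter.atTop
        (nhds ((Fintype.card G : ℝ)⁻¹ • ∑ g : G, ρ g (x 0)))
    ∧ ∃ C : ℝ, 0 ≤ C ∧ ∀ t : ℕ,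
        ‖x t - (Fintype.card G : ℝ)⁻¹ • ∑ g : G, ρ g (x 0)‖
          ≤ C * (1 - (Fintype.card G : ℝ) * δ) ^ (t / T) :=
  exponential_convergence_to_symmetrization_general ρ T hT δ hδ0 hδ1 s hs hq x hx
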